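/- Let n = 2m with m ≥ 1, and consider the infinitesimal character Λ_u of the special unipotent representation π_u = Ind over GL(r₁)×…×GL(r_s) with r₁ ≥ … ≥ r_s ≥ 1 and Σrᵢ = n, where Λ_u is the concatenation of the strings χᵢ = (rᵢ−1, rᵢ−3, …, ε+2, ε) with ε ≡ rᵢ−1 mod 2. If all coordinates of Λ_u (viewed as a multiset) are distinct and nonnegative and there are exactly m of them, then s ≤ 3; moreover if s = 2 then {r₁, r₂} = {n−1, 1}, and if s = 3 then the multiset {r₁, r₂, r₃} = {n−2b, 2b−1, 1} for some 1 ≤ b < n/2. -/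
import Mathlib

def posString (r : ℕ) : List ℕ := List.ofFn (fun j : Fin (r / 2) => r - 1 - 2 * (j : ℕ))

def unipCoords {s : ℕ} (r : Fin s → ℕ) : Multiset ℕ :=
  (((List.ofFn r).flatMap posString : List ℕ) : Multiset ℕ) +
    Multiset.replicate (((List.ofFn r).filter (fun x => x % 2 = 1)).length / 2) 0

lemma mem_posString {r v : ℕ} : v ∈ posString r ↔ ∃ j, j < r / 2 ∧ v = r - 1 - 2 * j := by
  simp only [posString, List.mem_ofFn, Set.mem_range]
  constructor
  · rintro ⟨j, rfl⟩; exact ⟨j, j.2, rfl⟩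
  · rintro ⟨j, hj, rfl⟩; exact ⟨⟨j, hj⟩, rfl⟩

lemma one_mem_posString {r : ℕ} (h1 : 1 ≤ r) (h2 : r % 2 = 0) : (1 : ℕ) ∈ posString r :=
  mem_posString.mpr ⟨r / 2 - 1, by omega, by omega⟩

lemma two_mem_posString {r : ℕ} (h1 : 3 ≤ r) (h2 : r % 2 = 1) : (2 : ℕ) ∈ posString r :=
  mem_posString.mpr ⟨r / 2 - 1, by omega, by omega⟩

lemma count_unip {s : ℕ} (r : Fin s → ℕ) (v : ℕ) (hv : v ≠ 0) :
    Multiset.count v (unipCoords r) = ∑ i, (posString (r i)).count v := by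
  unfold unipCoords
  rw [Multiset.count_add, Multiset.count_replicate,
    Multiset.coe_count, List.count_flatMap, List.map_ofFn, List.sum_ofFn]
  simp [hv, Ne.symm hv]

lemma not_two_same {s : ℕ} (r : Fin s → ℕ) (hnodup : (unipCoords r).Nodup)
    {i j : Fin s} (hij : i ≠ j) {v : ℕ} (hv : v ≠ 0)
    (h1 : v ∈ posString (r i)) (h2 : v ∈ posString (r j)) : False := by
  have hc := (Multiset.nodup_iff_count_le_one.mp hnodup) v
  rw [count_unip r v hv] at hc
  have h2le : 2 ≤ ∑ k, (posString (r k)).count v := by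
    have hsub : ({i, j} : Finset (Fin s)) ⊆ Finset.univ := Finset.subset_univ _
    have := Finset.sum_le_sum_of_subset (f := fun k => (posString (r k)).count v) hsub
    rw [Finset.sum_pair hij] at this
    have this2 := le_trans this hc
    have c1 : 1 ≤ (posString (r i)).count v := List.count_pos_iff.mpr h1
    have c2 : 1 ≤ (posString (r j)).count v := List.count_pos_iff.mpr h2
    omega
  exact absurd h2le (by omega)

lemma len_filter_eq_sum (p : ℕ → Bool) (l : List ℕ) :
    (l.filter p).length = (l.map fun x => if p x then 1 else 0).sum := by
  induction l with
  | nil => simp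
  | cons a l ih => by_cases h : p a <;> simp [List.filter_cons, h, ih] <;> omega

/-- Proposition 2.4: for `n = 2m` even and a partition `r₁ ≥ … ≥ r_s ≥ 1` of `n`, if
the coordinates of `Λ_u` form a multiset of exactly `m` distinct (nonnegative) numbers,
then `s ≤ 3`; if `s = 2` then `{r₁, r₂} = {n-1, 1}`, and if `s = 3` then
`{r₁, r₂, r₃} = {n-2b, 2b-1, 1}` for some `1 ≤ b < n/2`. -/
theorem stmt16 (n m s : ℕ) (hm : 1 ≤ m) (hn : n = 2 * m) (r : Fin s → ℕ)
    (hdec : ∀ i j : Fin s, i ≤ j → r j ≤ r i) (hpos : ∀ i, 1 ≤ r i)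
    (hsum : ∑ i, r i = n)
    (hnodup : (unipCoords r).Nodup) (hcard : Multiset.card (unipCoords r) = m) :
    s ≤ 3 ∧
    (s = 2 → ((List.ofFn r : List ℕ) : Multiset ℕ) = ([n - 1, 1] : List ℕ)) ∧
    (s = 3 → ∃ b, 1 ≤ b ∧ 2 * b < n ∧
      ((List.ofFn r : List ℕ) : Multiset ℕ) = ([n - 2 * b, 2 * b - 1, 1] : List ℕ)) := by
  classical
  -- no two parts of the same parity unless one of them is odd and equals 1
  have key : ∀ i j : Fin s, i ≠ j → r i % 2 = r j % 2 → r i = 1 ∨ r j = 1 := by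
    intro i j hij hpar
    by_contra hcon
    push_neg at hcon
    rcases Nat.eq_zero_or_pos (r i % 2) with h | h
    · exact not_two_same r hnodup hij one_ne_zero
        (one_mem_posString (hpos i) h) (one_mem_posString (hpos j) (by omega))
    · have h1 : r i % 2 = 1 := by omega
      have hi3 : 3 ≤ r i := by have := hpos i; omega
      have hj3 : 3 ≤ r j := by have := hpos j; omega
      exact not_two_same r hnodup hij two_ne_zero
        (two_mem_posString hi3 h1) (two_mem_posString hj3 (by omega))
  -- number of odd parts
  set O := ((List.ofFn r).filter (fun x => x % 2 = 1)).length with hO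
  have hOcard : O = (Finset.univ.filter (fun i : Fin s => r i % 2 = 1)).card := by
    rw [hO, len_filter_eq_sum, List.map_ofFn, List.sum_ofFn, Finset.card_filter]
    simp only [Function.comp]
    apply Finset.sum_congr rfl
    intro i _
    by_cases h : r i % 2 = 1 <;> simp [h]
  -- the replicate multiplicity is at most 1
  have ht : O / 2 ≤ 1 := by
    have hc := (Multiset.nodup_iff_count_le_one.mp hnodup) 0
    unfold unipCoords at hc
    rw [Multiset.count_add, Multiset.count_replicate, if_pos rfl] at hc
    omega
  -- parity: O is even
  have hOpar : O % 2 = 0 := by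
    have h1 : (∑ i, r i) % 2 = (∑ i, r i % 2) % 2 := Finset.sum_nat_mod _ _ _
    have h2 : ∑ i, r i % 2 = O := by
      rw [hOcard, Finset.card_filter]
      apply Finset.sum_congr rfl
      intro i _
      by_cases h : r i % 2 = 1 <;> simp [h] <;> omega
    rw [hsum, hn, h2] at h1
    omega
  have hO2 : O ≤ 2 := by omega
  -- at most one even part
  have hE : (Finset.univ.filter (fun i : Fin s => ¬ (r i % 2 = 1))).card ≤ 1 := by
    apply Finset.card_le_one.mpr
    intro a ha b hb
    by_contra hab
    simp only [Finset.mem_filter] at ha hb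
    rcases key a b hab (by omega) with h | h
    · have := hpos a; omega
    · have := hpos b; omega
  have hs3 : s ≤ 3 := by
    have := Finset.card_filter_add_card_filter_not
      (s := (Finset.univ : Finset (Fin s))) (p := fun i => r i % 2 = 1)
    simp only [Finset.card_univ, Fintype.card_fin] at this
    omega
  refine ⟨hs3, ?_, ?_⟩
  · -- s = 2
    rintro rfl
    have hsum2 : r 0 + r 1 = n := by rw [← hsum, Fin.sum_univ_two]
    have h01 : r 1 ≤ r 0 := hdec 0 1 (by decide)
    have hp0 := hpos 0; have hp1 := hpos 1
    have hpar : r 0 % 2 = r 1 % 2 := by omega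
    rcases key 0 1 (by decide) hpar with h | h
    · have : r 1 = 1 := by omega
      have h0 : r 0 = n - 1 := by omega
      have : List.ofFn r = [n - 1, 1] := by
        simp [List.ofFn_succ, h0, this]
      rw [this]
    · have h0 : r 0 = n - 1 := by omega
      have : List.ofFn r = [n - 1, 1] := by
        simp [List.ofFn_succ, h0, h]
      rw [this]
  · -- s = 3
    rintro rfl
    have hsum3 : r 0 + r 1 + r 2 = n := by rw [← hsum, Fin.sum_univ_three]
    have h01 : r 1 ≤ r 0 := hdec 0 1 (by decide)
    have h12 : r 2 ≤ r 1 := hdec 1 2 (by decide)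
    have hp0 := hpos 0; have hp1 := hpos 1; have hp2 := hpos 2
    have hofn : List.ofFn r = [r 0, r 1, r 2] := by simp [List.ofFn_succ]
    have k01 := key 0 1 (by decide)
    have k02 := key 0 2 (by decide)
    have k12 := key 1 2 (by decide)
    rcases Nat.mod_two_eq_zero_or_one (r 0) with e0 | e0 <;>
      rcases Nat.mod_two_eq_zero_or_one (r 1) with e1 | e1 <;>
      rcases Nat.mod_two_eq_zero_or_one (r 2) with e2 | e2
    -- EEE
    · have := k01 (by omega); omega
    -- EEO : sum parity
    · omega
    -- EOE
    · have := k02 (by omega); omega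
    -- EOO
    · have h2 : r 2 = 1 := by rcases k12 (by omega) with h | h <;> omega
      refine ⟨(r 1 + 1) / 2, by omega, by omega, ?_⟩
      rw [hofn]
      have e' : n - 2 * ((r 1 + 1) / 2) = r 0 := by omega
      have a' : 2 * ((r 1 + 1) / 2) - 1 = r 1 := by omega
      rw [e', a', h2]
    -- OEE
    · omega
    -- OEO
    · have h2 : r 2 = 1 := by rcases k02 (by omega) with h | h <;> omega
      refine ⟨(r 0 + 1) / 2, by omega, by omega, ?_⟩
      rw [hofn]
      have e' : n - 2 * ((r 0 + 1) / 2) = r 1 := by omega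
      have a' : 2 * ((r 0 + 1) / 2) - 1 = r 0 := by omega
      rw [e', a', h2]
      exact Multiset.coe_eq_coe.mpr (List.Perm.swap _ _ _)
    -- OOE
    · have h1 : r 1 = 1 := by rcases k01 (by omega) with h | h <;> omega
      omega
    -- OOO
    · omega
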